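/- Let d ≥ 2 be an integer and let g : ℂ⁴ → ℂ⁴ be a map satisfying g(G_X(u,v,w)) = G_X(T_d(u), T_d(v), T_d(w)) for all u, v, w ∈ ℂ (so g maps X_Q into X_Q). Then the set of bounded orbits {x ∈ X_Q : the sequence (gᵏ(x))_{k≥1} of iterates is bounded} equals {G_X(u,v,w) : u, v, w ∈ [−2,2] ⊂ ℝ}. -/

import Mathlib

/-- The polynomial parametrization `G_X : ℂ³ → ℂ⁴`. -/
noncomputable def GX (u v w : ℂ) : ℂ × ℂ × ℂ × ℂ :=
  (v ^ 2 + u * v * w + w ^ 2,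
   (u + v * w) ^ 2,
   (u + v * w) * (2 * v * w + u * (v ^ 2 + w ^ 2) / 2),
   (2 * v * w + u * (v ^ 2 + w ^ 2) / 2) ^ 2)

/-!
Writing `y = u + v w` and `m = 2 v w + u (v² + w²) / 2`, we have `G_X(u,v,w) = (P, y², y m, m²)`
and `u` is a root of the monic cubic `t³ - y t² + (P - 4) t + 4 y - 2 m`, while `v w = y - u` and
`v² + w² = P - u (y - u)`. Read backwards, this solves `G_X(u,v,w) = x` for every `x ∈ X_Q`;
read forwards, it bounds `u, v, w` in terms of `‖G_X(u,v,w)‖`, so `G_X` is proper. Since `G_X`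
semiconjugates `T_d × T_d × T_d` to `g`, a point `G_X(u,v,w)` has a bounded `g`-orbit iff `u`,
`v`, `w` have bounded `T_d`-orbits. Writing `u = s + s⁻¹`, the `T_d`-orbit of `u` is
`s^(d^k) + s^(-d^k)`, bounded iff `|s| = 1`, i.e. iff `u = 2 Re s ∈ [-2, 2]`.
-/

open Polynomial Bornology Set

section AlgClosed

variable {K : Type*} [Field K] [IsAlgClosed K]

lemma IsAlgClosed.exists_add_inv_eq (u : K) : ∃ s ≠ 0, s + s⁻¹ = u := by
  obtain ⟨s, hs⟩ := IsAlgClosed.exists_root (X ^ 2 - C u * X + 1 : K[X])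
    (by rw [show (X ^ 2 - C u * X + 1 : K[X]).degree = 2 by compute_degree!]; decide)
  simp only [IsRoot.def, eval_add, eval_sub, eval_mul, eval_pow, eval_C, eval_X,
    eval_one] at hs
  have hs0 : s ≠ 0 := by rintro rfl; simp at hs
  exact ⟨s, hs0, by field_simp; linear_combination hs⟩

lemma IsAlgClosed.exists_sqrt_of_sq_eq_mul {q r s : K} (h : r ^ 2 = q * s) :
    ∃ a m : K, a ^ 2 = q ∧ m ^ 2 = s ∧ a * m = r := by
  obtain ⟨a, rfl⟩ := IsAlgClosed.exists_pow_nat_eq q two_pos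
  rcases eq_or_ne a 0 with rfl | ha
  · obtain ⟨m, rfl⟩ := IsAlgClosed.exists_pow_nat_eq s two_pos
    exact ⟨0, m, by ring, rfl, by simp at h; simp [h]⟩
  · exact ⟨a, r / a, rfl, by field_simp; linear_combination h, by field_simp⟩

lemma IsAlgClosed.exists_mul_eq_sq_add_sq_eq [NeZero (2 : K)] (a b : K) :
    ∃ v w : K, v * w = a ∧ v ^ 2 + w ^ 2 = b := by
  obtain ⟨σ, hσ⟩ := IsAlgClosed.exists_pow_nat_eq (b + 2 * a) two_pos
  obtain ⟨δ, hδ⟩ := IsAlgClosed.exists_pow_nat_eq (b - 2 * a) two_pos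
  have h2 : (2 : K) ≠ 0 := two_ne_zero
  refine ⟨(σ + δ) / 2, (σ - δ) / 2, ?_, ?_⟩
  · field_simp; linear_combination hσ - hδ
  · field_simp; linear_combination 2 * hσ + 2 * hδ

lemma IsAlgClosed.exists_cubic_root (a b c : K) :
    ∃ u : K, u ^ 3 + a * u ^ 2 + b * u + c = 0 := by
  obtain ⟨u, hu⟩ := IsAlgClosed.exists_root (X ^ 3 + C a * X ^ 2 + C b * X + C c : K[X]) (by
    rw [show (X ^ 3 + C a * X ^ 2 + C b * X + C c : K[X]).degree = 3 by compute_degree!]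
    decide)
  exact ⟨u, by simpa using hu⟩

end AlgClosed

lemma GX_symm (u v w : ℂ) : GX u v w = GX u w v := by
  simp only [GX, Prod.mk.injEq]; refine ⟨?_, ?_, ?_, ?_⟩ <;> ring

lemma GX_mem_XQ (u v w : ℂ) : (GX u v w).2.2.1 ^ 2 = (GX u v w).2.1 * (GX u v w).2.2.2 := by
  simp only [GX]; ring

lemma GX_cubic (u v w : ℂ) :
    u ^ 3 = (u + v * w) * u ^ 2 + (4 - (GX u v w).1) * u
      + (2 * (2 * v * w + u * (v ^ 2 + w ^ 2) / 2) - 4 * (u + v * w)) := by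
  simp only [GX]; ring

lemma exists_GX_eq {x : ℂ × ℂ × ℂ × ℂ} (h : x.2.2.1 ^ 2 = x.2.1 * x.2.2.2) :
    ∃ u v w, GX u v w = x := by
  obtain ⟨p, q, r, s⟩ := x
  obtain ⟨y, m, rfl, rfl, rfl⟩ := IsAlgClosed.exists_sqrt_of_sq_eq_mul h
  obtain ⟨u, hu⟩ := IsAlgClosed.exists_cubic_root (-y) (p - 4) (4 * y - 2 * m)
  obtain ⟨v, w, hvw, hvw2⟩ := IsAlgClosed.exists_mul_eq_sq_add_sq_eq (y - u) (p - u * (y - u))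
  have hy : u + v * w = y := by linear_combination hvw
  have hm : 2 * v * w + u * (v ^ 2 + w ^ 2) / 2 = m := by
    linear_combination 2 * hvw + u / 2 * hvw2 + hu / 2
  refine ⟨u, v, w, ?_⟩
  simp only [GX, hy, hm, Prod.mk.injEq, and_true]
  linear_combination hvw2 + u * hvw

section RootBounds

variable {K : Type*} [NormedField K]

lemma norm_le_max_of_cubic {z b c e : K} (h : z ^ 3 = b * z ^ 2 + c * z + e) :
    ‖z‖ ≤ max 1 (‖b‖ + ‖c‖ + ‖e‖) := by
  rcases le_or_gt ‖z‖ 1 with h1 | h1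
  · exact le_max_of_le_left h1
  refine le_max_of_le_right (le_of_mul_le_mul_right ?_ (by positivity : 0 < ‖z‖ ^ 2))
  have hz : ‖z‖ ≤ ‖z‖ ^ 2 := by nlinarith
  calc ‖z‖ * ‖z‖ ^ 2 = ‖b * z ^ 2 + c * z + e‖ := by rw [← h, norm_pow]; ring
    _ ≤ ‖b‖ * ‖z‖ ^ 2 + ‖c‖ * ‖z‖ + ‖e‖ :=
      norm_add₃_le.trans_eq (by rw [norm_mul, norm_mul, norm_pow])
    _ ≤ (‖b‖ + ‖c‖ + ‖e‖) * ‖z‖ ^ 2 := by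
      nlinarith [mul_le_mul_of_nonneg_left hz (norm_nonneg c), norm_nonneg e]

lemma norm_le_max_of_quadratic {z b c : K} (h : z ^ 2 = b * z + c) :
    ‖z‖ ≤ max 1 (‖b‖ + ‖c‖) := by
  have h3 : z ^ 3 = b * z ^ 2 + c * z + 0 := by linear_combination z * h
  simpa using norm_le_max_of_cubic h3

lemma norm_le_sqrt_of_norm_sq_le {z : K} {M : ℝ} (h : ‖z ^ 2‖ ≤ M) : ‖z‖ ≤ √M := by
  simpa using Real.abs_le_sqrt (x := ‖z‖) (by rwa [← norm_pow])

end RootBounds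

lemma norm_GX_components_le {u v w : ℂ} {M : ℝ} (h : ‖GX u v w‖ ≤ M) :
    ‖(GX u v w).1‖ ≤ M ∧ ‖(GX u v w).2.1‖ ≤ M ∧ ‖(GX u v w).2.2.1‖ ≤ M ∧
      ‖(GX u v w).2.2.2‖ ≤ M :=
  ⟨(norm_fst_le _).trans h, (norm_fst_le _).trans <| (norm_snd_le _).trans h,
    (norm_fst_le _).trans <| (norm_snd_le _).trans <| (norm_snd_le _).trans h,
    (norm_snd_le _).trans <| (norm_snd_le _).trans <| (norm_snd_le _).trans h⟩

lemma exists_norm_le_of_norm_GX_le (M : ℝ) :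
    ∃ C, ∀ u v w : ℂ, ‖GX u v w‖ ≤ M → ‖u‖ ≤ C ∧ ‖v‖ ≤ C := by
  set Cu := max 1 (7 * √M + 4 + M)
  set B := √M + Cu
  set Cσ := √(M + Cu * B + 2 * B)
  refine ⟨max Cu (max 1 (Cσ + B)), fun u v w h => ?_⟩
  obtain ⟨hP, hQ, -, hS⟩ := norm_GX_components_le h
  have hP' : ‖v ^ 2 + u * v * w + w ^ 2‖ ≤ M := hP
  have hy : ‖u + v * w‖ ≤ √M := norm_le_sqrt_of_norm_sq_le hQ
  have hm : ‖2 * v * w + u * (v ^ 2 + w ^ 2) / 2‖ ≤ √M := norm_le_sqrt_of_norm_sq_le hS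
  have hu : ‖u‖ ≤ Cu := by
    refine (norm_le_max_of_cubic (GX_cubic u v w)).trans (max_le_max le_rfl ?_)
    have h4 : ‖4 - (GX u v w).1‖ ≤ 4 + M := (norm_sub_le _ _).trans (by norm_num; linarith)
    have h6 : ‖2 * (2 * v * w + u * (v ^ 2 + w ^ 2) / 2) - 4 * (u + v * w)‖ ≤ 6 * √M :=
      (norm_sub_le _ _).trans (by simp only [norm_mul]; norm_num; linarith)
    linarith
  have hvw : ‖v * w‖ ≤ B :=
    calc ‖v * w‖ = ‖(u + v * w) - u‖ := by rw [add_sub_cancel_left]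
      _ ≤ B := (norm_sub_le _ _).trans (by linarith)
  have hσ : ‖v + w‖ ≤ Cσ := by
    refine norm_le_sqrt_of_norm_sq_le ?_
    calc ‖(v + w) ^ 2‖ = ‖(v ^ 2 + u * v * w + w ^ 2) - u * (v * w) + 2 * (v * w)‖ := by ring_nf
      _ ≤ M + Cu * B + 2 * B := by
        refine (norm_add_le _ _).trans
          (add_le_add ((norm_sub_le _ _).trans (add_le_add hP' ?_)) ?_)
        · rw [norm_mul]; exact mul_le_mul hu hvw (norm_nonneg _) (hu.trans' (norm_nonneg _))
        · rw [norm_mul, RCLike.norm_ofNat]; linarith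
  have hv : ‖v‖ ≤ max 1 (Cσ + B) := by
    refine (norm_le_max_of_quadratic (b := v + w) (c := -(v * w)) (by ring)).trans
      (max_le_max le_rfl ?_)
    rw [norm_neg]; linarith
  exact ⟨le_max_of_le_left hu, le_max_of_le_right hv⟩

lemma iterate_add_inv_eq {K : Type*} [DivisionRing K] {f : K → K} {d : ℕ}
    (hf : ∀ s ≠ 0, f (s + s⁻¹) = s ^ d + (s ^ d)⁻¹) {s : K} (hs : s ≠ 0) (k : ℕ) :
    f^[k] (s + s⁻¹) = s ^ d ^ k + (s ^ d ^ k)⁻¹ := by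
  induction k with
  | zero => simp
  | succ k ih =>
    rw [Function.iterate_succ_apply', ih, hf _ (pow_ne_zero _ hs), ← pow_mul, pow_succ]

lemma Complex.exists_norm_eq_one_add_inv_eq {x : ℝ} (hx : x ∈ Icc (-2 : ℝ) 2) :
    ∃ s : ℂ, ‖s‖ = 1 ∧ s + s⁻¹ = x := by
  refine ⟨exp (Real.arccos (x / 2) * I), norm_exp_ofReal_mul_I _, ?_⟩
  rw [← exp_neg, ← neg_mul, ← two_cos, ← ofReal_cos, Real.cos_arccos (by linarith [hx.1])
    (by linarith [hx.2])]
  push_cast; ring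

lemma Complex.exists_mem_Icc_eq_add_inv {s : ℂ} (hs : ‖s‖ = 1) :
    ∃ x ∈ Icc (-2 : ℝ) 2, (x : ℂ) = s + s⁻¹ := by
  have hre := abs_le.mp (hs ▸ abs_re_le_norm s)
  refine ⟨2 * s.re, ⟨by linarith, by linarith⟩, ?_⟩
  rw [inv_eq_conj hs, add_conj]

section Chebyshev

variable {f : ℂ → ℂ} {d : ℕ}

lemma norm_iterate_le_two (hf : ∀ s ≠ 0, f (s + s⁻¹) = s ^ d + (s ^ d)⁻¹)
    {x : ℝ} (hx : x ∈ Icc (-2 : ℝ) 2) (k : ℕ) : ‖f^[k] x‖ ≤ 2 := by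
  obtain ⟨s, hs, hsx⟩ := Complex.exists_norm_eq_one_add_inv_eq hx
  rw [← hsx, iterate_add_inv_eq hf (norm_ne_zero_iff.mp (hs ▸ one_ne_zero)) k]
  refine (norm_add_le _ _).trans_eq ?_
  rw [norm_inv, norm_pow, hs]; norm_num

lemma norm_le_one_of_iterate_bounded (hf : ∀ s ≠ 0, f (s + s⁻¹) = s ^ d + (s ^ d)⁻¹)
    (hd : 2 ≤ d) {s : ℂ} (hs : s ≠ 0) {M : ℝ} (hM : ∀ k, ‖f^[k + 1] (s + s⁻¹)‖ ≤ M) : ‖s‖ ≤ 1 := by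
  by_contra! h1
  obtain ⟨n, hn⟩ := pow_unbounded_of_one_lt (M + 1) h1
  have hN : n ≤ d ^ (n + 1) := (Nat.lt_pow_self (by omega : 1 < d)).le.trans' (by omega)
  have hgrow : ‖s‖ ^ n ≤ ‖s‖ ^ d ^ (n + 1) := pow_le_pow_right₀ h1.le hN
  have hinv : ‖(s ^ d ^ (n + 1))⁻¹‖ ≤ 1 := by
    rw [norm_inv, norm_pow]; exact inv_le_one_of_one_le₀ (one_le_pow₀ h1.le)
  have hbound := hM n
  rw [iterate_add_inv_eq hf hs] at hbound
  have htri := norm_sub_le (s ^ d ^ (n + 1) + (s ^ d ^ (n + 1))⁻¹) (s ^ d ^ (n + 1))⁻¹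
  rw [add_sub_cancel_right, norm_pow] at htri
  linarith

lemma isBounded_range_iterate_iff (hf : ∀ s ≠ 0, f (s + s⁻¹) = s ^ d + (s ^ d)⁻¹)
    (hd : 2 ≤ d) (u : ℂ) :
    IsBounded (range fun k => f^[k + 1] u) ↔ ∃ x ∈ Icc (-2 : ℝ) 2, (x : ℂ) = u := by
  constructor
  · intro hbdd
    obtain ⟨M, hM⟩ := hbdd.exists_norm_le
    obtain ⟨s, hs, rfl⟩ := IsAlgClosed.exists_add_inv_eq u
    have h1 := norm_le_one_of_iterate_bounded hf hd hs fun k => hM _ ⟨k, rfl⟩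
    have h2 := norm_le_one_of_iterate_bounded hf hd (inv_ne_zero hs) (M := M) fun k => by
      simpa only [inv_inv, add_comm] using hM _ ⟨k, rfl⟩
    rw [norm_inv] at h2
    exact Complex.exists_mem_Icc_eq_add_inv <| le_antisymm h1 <| by
      simpa using (inv_le_one₀ (norm_pos_iff.mpr hs)).mp h2
  · rintro ⟨x, hx, rfl⟩
    exact isBounded_iff_forall_norm_le.mpr ⟨2, by
      rintro _ ⟨k, rfl⟩; exact norm_iterate_le_two hf hx _⟩

end Chebyshev

lemma isBounded_range_GX_iff (a b c : ℕ → ℂ) :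
    IsBounded (range fun k => GX (a k) (b k) (c k)) ↔
      IsBounded (range a) ∧ IsBounded (range b) ∧ IsBounded (range c) := by
  simp only [isBounded_iff_forall_norm_le, forall_mem_range]
  constructor
  · rintro ⟨M, hM⟩
    obtain ⟨C, hC⟩ := exists_norm_le_of_norm_GX_le M
    exact ⟨⟨C, fun k => (hC _ _ _ (hM k)).1⟩, ⟨C, fun k => (hC _ _ _ (hM k)).2⟩,
      ⟨C, fun k => (hC _ _ _ (GX_symm (a k) (b k) (c k) ▸ hM k)).2⟩⟩
  · rintro ⟨⟨A, hA⟩, ⟨B, hB⟩, ⟨C, hC⟩⟩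
    have hK := (isCompact_closedBall (0 : ℂ × ℂ × ℂ) (max A (max B C))).image
      (f := fun p => GX p.1 p.2.1 p.2.2) (by unfold GX; fun_prop)
    obtain ⟨M, hM⟩ := isBounded_iff_forall_norm_le.mp hK.isBounded
    refine ⟨M, fun k => hM _ ⟨(a k, b k, c k), ?_, rfl⟩⟩
    simp only [mem_closedBall_zero_iff, Prod.norm_def]
    exact max_le_max (hA k) (max_le_max (hB k) (hC k))

/-- For `d ≥ 2` and `g` satisfying `g(G_X(u,v,w)) = G_X(T_d(u),T_d(v),T_d(w))`, the set
of points of `X_Q = {r² = qs}` with bounded forward orbit equals the image under `G_X`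
of the real cube `[-2,2]³`. -/
theorem K_set_on_XQ (d : ℕ) (hd : 2 ≤ d) (T : Polynomial ℤ)
    (hT : ∀ s : ℂ, s ≠ 0 → Polynomial.aeval (s + s⁻¹) T = s ^ (d : ℤ) + s ^ (-(d : ℤ)))
    (g : ℂ × ℂ × ℂ × ℂ → ℂ × ℂ × ℂ × ℂ)
    (hg : ∀ u v w : ℂ, g (GX u v w)
      = GX (Polynomial.aeval u T) (Polynomial.aeval v T) (Polynomial.aeval w T)) :
    {x : ℂ × ℂ × ℂ × ℂ | x.2.2.1 ^ 2 = x.2.1 * x.2.2.2 ∧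
        Bornology.IsBounded (Set.range fun k : ℕ => g^[k + 1] x)}
      = {x : ℂ × ℂ × ℂ × ℂ | ∃ u v w : ℝ,
          u ∈ Set.Icc (-2 : ℝ) 2 ∧ v ∈ Set.Icc (-2 : ℝ) 2 ∧ w ∈ Set.Icc (-2 : ℝ) 2 ∧
          GX (u : ℂ) (v : ℂ) (w : ℂ) = x} := by
  set t : ℂ → ℂ := fun z => aeval z T
  have ht : ∀ s ≠ 0, t (s + s⁻¹) = s ^ d + (s ^ d)⁻¹ := fun s hs => by
    simpa only [zpow_neg, zpow_natCast] using hT s hs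
  have hgt : ∀ k u v w, g^[k] (GX u v w) = GX (t^[k] u) (t^[k] v) (t^[k] w) := by
    intro k
    induction k with
    | zero => simp
    | succ k ih => intro u v w; rw [Function.iterate_succ_apply, hg, ih]; rfl
  have horbit : ∀ u v w, IsBounded (range fun k => g^[k + 1] (GX u v w)) ↔
      (∃ x ∈ Icc (-2 : ℝ) 2, (x : ℂ) = u) ∧ (∃ x ∈ Icc (-2 : ℝ) 2, (x : ℂ) = v) ∧
        ∃ x ∈ Icc (-2 : ℝ) 2, (x : ℂ) = w := by
    intro u v w
    simp only [hgt, isBounded_range_GX_iff, isBounded_range_iterate_iff ht hd]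
  ext x
  constructor
  · rintro ⟨hx, hbdd⟩
    obtain ⟨u, v, w, rfl⟩ := exists_GX_eq hx
    obtain ⟨⟨u, hu, rfl⟩, ⟨v, hv, rfl⟩, ⟨w, hw, rfl⟩⟩ := (horbit _ _ _).mp hbdd
    exact ⟨u, v, w, hu, hv, hw, rfl⟩
  · rintro ⟨u, v, w, hu, hv, hw, rfl⟩
    exact ⟨GX_mem_XQ _ _ _, (horbit _ _ _).mpr ⟨⟨u, hu, rfl⟩, ⟨v, hv, rfl⟩, ⟨w, hw, rfl⟩⟩⟩
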